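/- arXiv:1108.3628 — 3 statements merged into one kernel-verified Lean document; each statement's English description precedes it below -/
import Mathlib

section
/- For an irrational α with continued fraction [0; b₁, b₂, ...], limsup_{k→∞}(bₖ + v_{k-1} + tₖ) ≥ √5, where vₖ = [0; bₖ, ..., b₁] and tₖ = [0; b_{k+1}, ...], with equality if and only if bₖ = 1 for all sufficiently large k. -/
open Filter

noncomputable def cfFin : List ℕ → ℝ
  | [] => 0
  | a :: l => 1 / ((a : ℝ) + cfFin l)

noncomputable def cfInf (a : ℕ → ℕ) : ℝ :=
  limUnder Filter.atTop (fun n => cfFin (List.ofFn (fun i : Fin n => a i)))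

/-- forward tail: `cfT a k = [0; b_{k+1}, b_{k+2}, …]` where `bᵢ = a (i-1)`. -/
noncomputable def cfT (a : ℕ → ℕ) (k : ℕ) : ℝ := cfInf (fun n => a (n + k))

/-- backward tail: `cfV a k = [0; b_k, …, b_1]`. -/
noncomputable def cfV (a : ℕ → ℕ) (k : ℕ) : ℝ := cfFin ((List.range k).reverse.map a)

def cfQ (a : ℕ → ℕ) : ℕ → ℕ
  | 0 => 1
  | 1 => a 0
  | (k + 2) => a (k + 1) * cfQ a (k + 1) + cfQ a k

def cfP (a : ℕ → ℕ) : ℕ → ℕ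
  | 0 => 0
  | 1 => 1
  | (k + 2) => a (k + 1) * cfP a (k + 1) + cfP a k

/-!
Write `f k = b + v + t` for the term under the `limsup`. Unfolding `v` or `t` once gives
`f k = 1 / v' + t' = 1 / t + v` with `v' = [0; b, …]` and `t' = [0; b', …]` the next backward and
forward tails. If `f k ≤ √5` and `f (k + 1) ≤ √5`, then `λ = v'` and `μ = t'` satisfy
`1 / λ + μ ≤ √5` and `1 / μ + λ ≤ √5`; eliminating `μ` gives `λ ^ 2 - √5 λ + 1 ≤ 0`, so
`λ ≥ φ⁻¹`, strictly since `λ` is rational. Three consecutive terms `≤ √5` would thus give two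
consecutive backward tails `v, v'` above `φ⁻¹`, although `v' = 1 / (b + v) < 1 / (1 + φ⁻¹) = φ⁻¹`.

If the `limsup` is `√5`, eventually `f < 5 / 2`, so the partial quotients are eventually `≤ 2`,
and a `2` among them gives `f ≥ 2 + 1 / 3 + 1 / 3`. Conversely, once all partial quotients are `1`,
the forward tails equal `φ⁻¹` and the backward tails converge to it, so `f → 1 + 2 φ⁻¹ = √5`.
-/

open Set Topology Real goldenRatio

noncomputable def cfFold (l : List ℕ) (x : ℝ) : ℝ :=
  l.foldr (fun (a : ℕ) (y : ℝ) => 1 / ((a : ℝ) + y)) x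

section cfFold

variable {a b : ℕ} {l : List ℕ} {x y : ℝ}

@[simp] lemma cfFold_nil : cfFold [] x = x := rfl

@[simp] lemma cfFold_cons : cfFold (a :: l) x = 1 / ((a : ℝ) + cfFold l x) := rfl

lemma cfFold_append (l₁ l₂ : List ℕ) (x : ℝ) : cfFold (l₁ ++ l₂) x = cfFold l₁ (cfFold l₂ x) := by
  unfold cfFold; exact List.foldr_append

lemma cfFin_eq_cfFold (l : List ℕ) : cfFin l = cfFold l 0 := by
  induction l with
  | nil => rfl
  | cons a l ih => rw [cfFin, ih, cfFold_cons]

lemma one_div_natCast_add_mem_Icc (ha : 1 ≤ a) (hx : 0 ≤ x) : 1 / ((a : ℝ) + x) ∈ Icc 0 1 := by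
  have ha' : (1 : ℝ) ≤ a := by exact_mod_cast ha
  exact ⟨by positivity, (div_le_one (by linarith)).2 (by linarith)⟩

lemma cfFold_mem_Icc (hl : ∀ b ∈ l, 1 ≤ b) (hx : x ∈ Icc 0 1) : cfFold l x ∈ Icc 0 1 := by
  induction l with
  | nil => exact hx
  | cons a l ih =>
    exact one_div_natCast_add_mem_Icc (hl a (.head _)) (ih fun b hb => hl b (.tail _ hb)).1

lemma cfFin_mem_Icc (hl : ∀ b ∈ l, 1 ≤ b) : cfFin l ∈ Icc 0 1 :=
  cfFin_eq_cfFold l ▸ cfFold_mem_Icc hl ⟨le_rfl, zero_le_one⟩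

lemma abs_one_div_add_sub_one_div_add (c x y : ℝ) (hx : 0 < c + x) (hy : 0 < c + y) :
    |1 / (c + x) - 1 / (c + y)| = |x - y| / ((c + x) * (c + y)) := by
  rw [div_sub_div _ _ hx.ne' hy.ne', abs_div, abs_of_pos (mul_pos hx hy), ← abs_neg]
  ring_nf

lemma abs_cfFold_singleton_sub_le (ha : 1 ≤ a) (hx : 0 ≤ x) (hy : 0 ≤ y) :
    |cfFold [a] x - cfFold [a] y| ≤ |x - y| := by
  have ha' : (1 : ℝ) ≤ a := by exact_mod_cast ha
  rw [cfFold_cons, cfFold_cons, cfFold_nil, cfFold_nil,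
    abs_one_div_add_sub_one_div_add _ _ _ (by linarith) (by linarith)]
  exact div_le_self (abs_nonneg _) (by nlinarith)

-- `cfFold [a, b] x = (b + x) / (a (b + x) + 1)`, a Möbius map with derivative at most `1 / 4`.
lemma abs_cfFold_pair_sub_le (ha : 1 ≤ a) (hb : 1 ≤ b) (hx : 0 ≤ x) (hy : 0 ≤ y) :
    |cfFold [a, b] x - cfFold [a, b] y| ≤ |x - y| / 4 := by
  have ha' : (1 : ℝ) ≤ a := by exact_mod_cast ha
  have hb' : (1 : ℝ) ≤ b := by exact_mod_cast hb
  have hform : ∀ z : ℝ, 0 ≤ z → cfFold [a, b] z = (b + z) / (a * (b + z) + 1) := by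
    intro z hz
    simp only [cfFold_cons, cfFold_nil]
    field_simp
  have hx2 : 2 ≤ a * (b + x) + 1 := by nlinarith
  have hy2 : 2 ≤ a * (b + y) + 1 := by nlinarith
  rw [hform x hx, hform y hy, div_sub_div _ _ (by linarith) (by linarith), abs_div,
    abs_of_pos (mul_pos (by linarith) (by linarith) :
      (0 : ℝ) < (a * (b + x) + 1) * (a * (b + y) + 1))]
  calc |(b + x) * (a * (b + y) + 1) - (a * (b + x) + 1) * (b + y)| /
        ((a * (b + x) + 1) * (a * (b + y) + 1))
      = |x - y| / ((a * (b + x) + 1) * (a * (b + y) + 1)) := by ring_nf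
    _ ≤ |x - y| / 4 := div_le_div_of_nonneg_left (abs_nonneg _) (by norm_num) (by nlinarith)

lemma abs_cfFold_sub_le (hl : ∀ b ∈ l, 1 ≤ b) (hx : x ∈ Icc 0 1) (hy : y ∈ Icc 0 1) :
    |cfFold l x - cfFold l y| ≤ 2 * (1 / 2) ^ l.length * |x - y| := by
  induction l using List.twoStepInduction with
  | nil => simp only [cfFold_nil, List.length_nil]; nlinarith [abs_nonneg (x - y)]
  | singleton a =>
    have := abs_cfFold_singleton_sub_le (hl a (.head _)) hx.1 hy.1
    simp only [List.length_singleton]; linarith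
  | cons_cons a b l ih _ =>
    have hl' : ∀ c ∈ l, 1 ≤ c := fun c hc => hl c (.tail _ (.tail _ hc))
    have hpair := abs_cfFold_pair_sub_le (hl a (.head _)) (hl b (.tail _ (.head _)))
      (cfFold_mem_Icc hl' hx).1 (cfFold_mem_Icc hl' hy).1
    rw [show a :: b :: l = [a, b] ++ l from rfl, cfFold_append, cfFold_append]
    calc _ ≤ |cfFold l x - cfFold l y| / 4 := hpair
      _ ≤ 2 * (1 / 2) ^ l.length * |x - y| / 4 := by gcongr; exact ih hl'
      _ = 2 * (1 / 2) ^ (a :: b :: l).length * |x - y| := by simp only [List.length_cons]; ring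

end cfFold

section cfInf

variable {b : ℕ → ℕ}

lemma one_le_of_mem_ofFn (hb : ∀ n, 1 ≤ b n) {n : ℕ} :
    ∀ c ∈ List.ofFn (fun i : Fin n => b i), 1 ≤ c := by
  simp only [List.mem_ofFn]; rintro c ⟨i, rfl⟩; exact hb i

lemma cfFin_ofFn_succ (b : ℕ → ℕ) (n : ℕ) :
    cfFin (List.ofFn fun i : Fin (n + 1) => b i) =
      1 / ((b 0 : ℝ) + cfFin (List.ofFn fun i : Fin n => b (i + 1))) := by
  simp only [List.ofFn_succ, Fin.val_zero, Fin.val_succ, cfFin]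

lemma cfFin_ofFn_succ_eq_cfFold (b : ℕ → ℕ) (n : ℕ) :
    cfFin (List.ofFn fun i : Fin (n + 1) => b i) =
      cfFold (List.ofFn fun i : Fin n => b i) (1 / b n) := by
  rw [cfFin_eq_cfFold, List.ofFn_succ', List.concat_eq_append, cfFold_append]
  simp

lemma dist_cfFin_ofFn_succ_le (hb : ∀ n, 1 ≤ b n) (n : ℕ) :
    dist (cfFin (List.ofFn fun i : Fin n => b i)) (cfFin (List.ofFn fun i : Fin (n + 1) => b i)) ≤
      2 * (1 / 2) ^ n := by
  have hlast : 1 / (b n : ℝ) ∈ Icc 0 1 := by simpa using one_div_natCast_add_mem_Icc (hb n) le_rfl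
  rw [cfFin_ofFn_succ_eq_cfFold, cfFin_eq_cfFold, Real.dist_eq]
  calc _ ≤ 2 * (1 / 2) ^ n * |0 - 1 / (b n : ℝ)| :=
        by simpa using abs_cfFold_sub_le (one_le_of_mem_ofFn hb) ⟨le_rfl, zero_le_one⟩ hlast
    _ ≤ 2 * (1 / 2) ^ n := by
        rw [zero_sub, abs_neg, abs_of_nonneg hlast.1]
        exact mul_le_of_le_one_right (by positivity) hlast.2

lemma tendsto_cfFin_ofFn_cfInf (hb : ∀ n, 1 ≤ b n) :
    Tendsto (fun n => cfFin (List.ofFn fun i : Fin n => b i)) atTop (𝓝 (cfInf b)) :=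
  (cauchySeq_of_le_geometric _ _ (by norm_num) (dist_cfFin_ofFn_succ_le hb)).tendsto_limUnder

lemma cfInf_mem_Icc (hb : ∀ n, 1 ≤ b n) : cfInf b ∈ Icc 0 1 :=
  isClosed_Icc.mem_of_tendsto (tendsto_cfFin_ofFn_cfInf hb) <|
    .of_forall fun _ => cfFin_mem_Icc (one_le_of_mem_ofFn hb)

lemma cfInf_eq (hb : ∀ n, 1 ≤ b n) : cfInf b = 1 / ((b 0 : ℝ) + cfInf fun n => b (n + 1)) := by
  have hpos : 0 < (b 0 : ℝ) + cfInf fun n => b (n + 1) := by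
    have : (1 : ℝ) ≤ b 0 := by exact_mod_cast hb 0
    linarith [(cfInf_mem_Icc fun n => hb (n + 1)).1]
  refine tendsto_nhds_unique ((tendsto_cfFin_ofFn_cfInf hb).comp (tendsto_add_atTop_nat 1)) ?_
  simp only [Function.comp_def, cfFin_ofFn_succ]
  exact tendsto_const_nhds.div
    (tendsto_const_nhds.add (tendsto_cfFin_ofFn_cfInf fun n => hb (n + 1))) hpos.ne'

end cfInf

section cfTV

variable {a : ℕ → ℕ} {k : ℕ}

lemma cfT_eq (ha : ∀ n, 1 ≤ a n) (k : ℕ) : cfT a k = 1 / ((a k : ℝ) + cfT a (k + 1)) := by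
  rw [cfT, cfInf_eq fun n => ha (n + k), cfT]
  simp only [zero_add, add_right_comm _ 1 k, add_assoc]

lemma cfT_mem_Icc (ha : ∀ n, 1 ≤ a n) (k : ℕ) : cfT a k ∈ Icc 0 1 :=
  cfInf_mem_Icc fun n => ha (n + k)

lemma one_div_add_one_le_cfT (ha : ∀ n, 1 ≤ a n) (k : ℕ) : 1 / ((a k : ℝ) + 1) ≤ cfT a k := by
  rw [cfT_eq ha]
  have : (1 : ℝ) ≤ a k := by exact_mod_cast ha k
  gcongr
  · linarith [(cfT_mem_Icc ha (k + 1)).1]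
  · exact (cfT_mem_Icc ha (k + 1)).2

lemma cfT_eq_of_forall_ge {N : ℕ} (hN : ∀ k ≥ N, a k = 1) (hk : N ≤ k) :
    cfT a k = cfInf fun _ => 1 := by
  rw [cfT]; congr; funext n; exact hN _ (by omega)

lemma cfV_zero (a : ℕ → ℕ) : cfV a 0 = 0 := rfl

lemma cfV_succ (a : ℕ → ℕ) (k : ℕ) : cfV a (k + 1) = 1 / ((a k : ℝ) + cfV a k) := by
  simp only [cfV, List.range_succ, List.reverse_append, List.reverse_singleton,
    List.singleton_append, List.map_cons, cfFin]

lemma cfV_mem_Icc (ha : ∀ n, 1 ≤ a n) (k : ℕ) : cfV a k ∈ Icc 0 1 := by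
  induction k with
  | zero => rw [cfV_zero]; exact ⟨le_rfl, zero_le_one⟩
  | succ k ih => rw [cfV_succ]; exact one_div_natCast_add_mem_Icc (ha k) ih.1

lemma one_div_add_one_le_cfV_succ (ha : ∀ n, 1 ≤ a n) (k : ℕ) :
    1 / ((a k : ℝ) + 1) ≤ cfV a (k + 1) := by
  rw [cfV_succ]
  have : (1 : ℝ) ≤ a k := by exact_mod_cast ha k
  gcongr
  · linarith [(cfV_mem_Icc ha k).1]
  · exact (cfV_mem_Icc ha k).2

lemma cfV_succ_pos (ha : ∀ n, 1 ≤ a n) (k : ℕ) : 0 < cfV a (k + 1) :=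
  lt_of_lt_of_le (by positivity) (one_div_add_one_le_cfV_succ ha k)

lemma cfV_mem_range_ratCast (a : ℕ → ℕ) (k : ℕ) : cfV a k ∈ range ((↑) : ℚ → ℝ) := by
  induction k with
  | zero => exact ⟨0, by rw [cfV_zero, Rat.cast_zero]⟩
  | succ k ih =>
    obtain ⟨q, hq⟩ := ih
    exact ⟨1 / (a k + q), by rw [cfV_succ, ← hq]; push_cast; rfl⟩

end cfTV

lemma inv_goldenRatio_eq_sub_one : φ⁻¹ = φ - 1 := by
  rw [inv_goldenRatio, ← one_sub_goldenRatio]; ring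

lemma goldenRatio_add_inv_goldenRatio : φ + φ⁻¹ = √5 := by
  rw [inv_goldenRatio, ← sub_eq_add_neg, goldenRatio_sub_goldenConj]

lemma cfInf_const_one : cfInf (fun _ => 1) = φ⁻¹ := by
  set x := cfInf fun _ => 1
  have hx : x = 1 / (1 + x) := by simpa using cfInf_eq (b := fun _ => 1) fun _ => le_rfl
  have hx0 : 0 ≤ x := (cfInf_mem_Icc fun _ => le_rfl).1
  have hquad : (x - φ⁻¹) * (x + φ) = 0 := by
    rw [inv_goldenRatio_eq_sub_one]
    field_simp at hx
    linear_combination hx - goldenRatio_sq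
  rcases mul_eq_zero.1 hquad with h | h
  · linarith
  · linarith [goldenRatio_pos]

lemma inv_goldenRatio_le_of_one_div_add_le {l m : ℝ} (hl : 0 < l) (hm : 0 < m)
    (h₁ : 1 / l + m ≤ √5) (h₂ : 1 / m + l ≤ √5) : φ⁻¹ ≤ l := by
  have hs : √5 ^ 2 = 5 := Real.sq_sqrt (by norm_num)
  have e₁ : l * m ≤ √5 * l - 1 := by
    have := mul_le_mul_of_nonneg_left h₁ hl.le
    rw [mul_add, mul_one_div_cancel hl.ne'] at this; linarith
  have e₂ : 1 ≤ (√5 - l) * m := by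
    have := mul_le_mul_of_nonneg_right h₂ hm.le
    rw [add_mul, one_div_mul_cancel hm.ne'] at this; linarith
  have hsl : 0 < √5 - l := by
    have : 0 < 1 / m := by positivity
    linarith
  have h5 : √5 * (l ^ 2 + 1) ≤ 5 * l := by
    nlinarith [mul_le_mul_of_nonneg_left e₂ hl.le, mul_le_mul_of_nonneg_right e₁ hsl.le]
  have hquad : l ^ 2 + 1 ≤ √5 * l := by
    nlinarith [mul_le_mul_of_nonneg_left h5 (Real.sqrt_nonneg 5)]
  by_contra! hlt
  have : φ⁻¹ < φ := by rw [inv_goldenRatio_eq_sub_one]; linarith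
  -- `l ^ 2 - √5 l + 1 = (l - φ⁻¹) (l - φ)`
  nlinarith [mul_pos (sub_pos.2 hlt) (sub_pos.2 (hlt.trans this)), goldenRatio_add_inv_goldenRatio,
    mul_inv_cancel₀ goldenRatio_ne_zero]

noncomputable def lagrangeTerm (a : ℕ → ℕ) (k : ℕ) : ℝ := a k + cfV a k + cfT a (k + 1)

section lagrangeTerm

variable {a : ℕ → ℕ}

lemma lagrangeTerm_eq_one_div_cfV_add (a : ℕ → ℕ) (k : ℕ) :
    lagrangeTerm a k = 1 / cfV a (k + 1) + cfT a (k + 1) := by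
  rw [lagrangeTerm, cfV_succ, one_div_one_div]

lemma lagrangeTerm_eq_one_div_cfT_add (ha : ∀ n, 1 ≤ a n) (k : ℕ) :
    lagrangeTerm a k = 1 / cfT a k + cfV a k := by
  rw [lagrangeTerm, cfT_eq ha k, one_div_one_div]; ring

lemma inv_goldenRatio_lt_cfV_succ (ha : ∀ n, 1 ≤ a n) {k : ℕ}
    (h₁ : lagrangeTerm a k ≤ √5) (h₂ : lagrangeTerm a (k + 1) ≤ √5) : φ⁻¹ < cfV a (k + 1) := by
  rw [lagrangeTerm_eq_one_div_cfV_add] at h₁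
  rw [lagrangeTerm_eq_one_div_cfT_add ha] at h₂
  have hT : 0 < cfT a (k + 1) := lt_of_lt_of_le (by positivity) (one_div_add_one_le_cfT ha _)
  refine (inv_goldenRatio_le_of_one_div_add_le (cfV_succ_pos ha k) hT h₁ h₂).lt_of_ne ?_
  rintro h
  exact goldenRatio_irrational.inv (h ▸ cfV_mem_range_ratCast a (k + 1))

lemma sqrt_five_lt_lagrangeTerm_among_three (ha : ∀ n, 1 ≤ a n) (k : ℕ) :
    √5 < lagrangeTerm a k ∨ √5 < lagrangeTerm a (k + 1) ∨ √5 < lagrangeTerm a (k + 2) := by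
  by_contra! ⟨h₁, h₂, h₃⟩
  have hv₁ := inv_goldenRatio_lt_cfV_succ ha h₁ h₂
  have hv₂ := inv_goldenRatio_lt_cfV_succ ha h₂ h₃
  have hak : (1 : ℝ) ≤ a (k + 1) := by exact_mod_cast ha (k + 1)
  have : cfV a (k + 2) < φ⁻¹ := by
    rw [cfV_succ, ← one_div]
    exact one_div_lt_one_div_of_lt goldenRatio_pos (by linarith [inv_goldenRatio_eq_sub_one])
  linarith

lemma frequently_sqrt_five_lt_lagrangeTerm (ha : ∀ n, 1 ≤ a n) :
    ∃ᶠ k in atTop, √5 < lagrangeTerm a k := by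
  refine frequently_atTop.2 fun n => ?_
  rcases sqrt_five_lt_lagrangeTerm_among_three ha n with h | h | h
  exacts [⟨n, le_rfl, h⟩, ⟨n + 1, by omega, h⟩, ⟨n + 2, by omega, h⟩]

lemma sqrt_five_le_limsup_lagrangeTerm (ha : ∀ n, 1 ≤ a n) :
    (√5 : EReal) ≤ limsup (fun k => (lagrangeTerm a k : EReal)) atTop :=
  le_limsup_of_frequently_le ((frequently_sqrt_five_lt_lagrangeTerm ha).mono
    fun _ h => EReal.coe_le_coe_iff.2 h.le) (isBoundedUnder_of ⟨⊤, fun _ => le_top⟩)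

lemma eight_thirds_le_lagrangeTerm (ha : ∀ n, 1 ≤ a n) {k : ℕ} (h₀ : a k ≤ 2)
    (h₁ : 2 ≤ a (k + 1)) (h₂ : a (k + 2) ≤ 2) : 8 / 3 ≤ lagrangeTerm a (k + 1) := by
  have hv := one_div_add_one_le_cfV_succ ha k
  have ht := one_div_add_one_le_cfT ha (k + 2)
  have h₀' : (a k : ℝ) ≤ 2 := by exact_mod_cast h₀
  have h₁' : (2 : ℝ) ≤ a (k + 1) := by exact_mod_cast h₁
  have h₂' : (a (k + 2) : ℝ) ≤ 2 := by exact_mod_cast h₂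
  have hv3 : 1 / 3 ≤ cfV a (k + 1) := le_trans (by gcongr; linarith) hv
  have ht3 : 1 / 3 ≤ cfT a (k + 2) := le_trans (by gcongr; linarith) ht
  rw [lagrangeTerm]
  linarith

lemma eventually_eq_one_of_limsup_lt (ha : ∀ n, 1 ≤ a n)
    (h : limsup (fun k => (lagrangeTerm a k : EReal)) atTop < ((5 / 2 : ℝ) : EReal)) :
    ∀ᶠ k in atTop, a k = 1 := by
  obtain ⟨N, hN⟩ := eventually_atTop.1 (eventually_lt_of_limsup_lt h)
  have hlt : ∀ k ≥ N, lagrangeTerm a k < 5 / 2 := fun k hk => EReal.coe_lt_coe_iff.1 (hN k hk)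
  have hle : ∀ k ≥ N, a k ≤ 2 := by
    intro k hk
    have : (a k : ℝ) < 3 := by
      linarith [hlt k hk, (cfV_mem_Icc ha k).1, (cfT_mem_Icc ha (k + 1)).1,
        show (a k : ℝ) + cfV a k + cfT a (k + 1) = lagrangeTerm a k from rfl]
    have : a k < 3 := by exact_mod_cast this
    omega
  refine eventually_atTop.2 ⟨N + 1, fun k hk => ?_⟩
  obtain ⟨j, rfl⟩ : ∃ j, k = j + 1 := ⟨k - 1, by omega⟩
  by_contra hne
  have := eight_thirds_le_lagrangeTerm ha (hle j (by omega)) (by have := ha (j + 1); omega)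
    (hle (j + 2) (by omega))
  linarith [hlt (j + 1) (by omega)]

end lagrangeTerm

section eventuallyOne

variable {a : ℕ → ℕ} {N : ℕ}

lemma abs_cfV_succ_sub_inv_goldenRatio_le (ha : ∀ n, 1 ≤ a n) (hN : ∀ k ≥ N, a k = 1) {k : ℕ}
    (hk : N ≤ k) : |cfV a (k + 1) - φ⁻¹| ≤ φ⁻¹ * |cfV a k - φ⁻¹| := by
  have hv := (cfV_mem_Icc ha k).1
  have hφ : 1 + φ⁻¹ = φ := by rw [inv_goldenRatio_eq_sub_one]; ring
  have hfix : φ⁻¹ = 1 / (1 + φ⁻¹) := by rw [hφ, one_div]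
  rw [cfV_succ, hN k hk, Nat.cast_one]
  nth_rewrite 1 [hfix]
  rw [abs_one_div_add_sub_one_div_add _ _ _ (by linarith) (by positivity), hφ, div_eq_mul_inv,
    mul_comm]
  gcongr
  exact le_mul_of_one_le_left goldenRatio_pos.le (by linarith)

lemma tendsto_cfV_of_forall_ge (ha : ∀ n, 1 ≤ a n) (hN : ∀ k ≥ N, a k = 1) :
    Tendsto (cfV a) atTop (𝓝 φ⁻¹) := by
  have hbound : ∀ m, |cfV a (m + N) - φ⁻¹| ≤ φ⁻¹ ^ m * |cfV a N - φ⁻¹| := by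
    intro m
    induction m with
    | zero => simp
    | succ m ih =>
      rw [add_right_comm, pow_succ', mul_assoc]
      exact (abs_cfV_succ_sub_inv_goldenRatio_le ha hN (by omega)).trans
        (mul_le_mul_of_nonneg_left ih (by positivity))
  have hr : φ⁻¹ < 1 := inv_lt_one_of_one_lt₀ one_lt_goldenRatio
  have hgeom : Tendsto (fun m => φ⁻¹ ^ m * |cfV a N - φ⁻¹|) atTop (𝓝 0) := by
    simpa using (tendsto_pow_atTop_nhds_zero_of_lt_one (by positivity) hr).mul_const
      |cfV a N - φ⁻¹|
  refine (tendsto_add_atTop_iff_nat N).1 ?_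
  exact tendsto_iff_norm_sub_tendsto_zero.2 (squeeze_zero (fun _ => norm_nonneg _) hbound hgeom)

lemma tendsto_lagrangeTerm_of_eventually_eq_one (ha : ∀ n, 1 ≤ a n)
    (hev : ∀ᶠ k in atTop, a k = 1) : Tendsto (lagrangeTerm a) atTop (𝓝 √5) := by
  obtain ⟨N, hN⟩ := eventually_atTop.1 hev
  have hlim : Tendsto (fun k => 1 + cfV a k + φ⁻¹) atTop (𝓝 (1 + φ⁻¹ + φ⁻¹)) :=
    (tendsto_const_nhds.add (tendsto_cfV_of_forall_ge ha hN)).add tendsto_const_nhds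
  rw [show 1 + φ⁻¹ + φ⁻¹ = √5 by
    rw [← goldenRatio_add_inv_goldenRatio, inv_goldenRatio_eq_sub_one]; ring] at hlim
  refine hlim.congr' (eventually_atTop.2 ⟨N, fun k hk => ?_⟩)
  rw [lagrangeTerm, hN k hk, cfT_eq_of_forall_ge hN (by omega), cfInf_const_one, Nat.cast_one]

end eventuallyOne

/-- Hurwitz: limsup (bₖ + v_{k-1} + tₖ) ≥ √5, with equality iff bₖ = 1
eventually. -/
theorem stmt8 (a : ℕ → ℕ) (ha : ∀ n, 1 ≤ a n) :
    ((Real.sqrt 5 : ℝ) : EReal) ≤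
      Filter.limsup (fun k => (((a k : ℝ) + cfV a k + cfT a (k + 1) : ℝ) : EReal))
        Filter.atTop ∧
    (Filter.limsup (fun k => (((a k : ℝ) + cfV a k + cfT a (k + 1) : ℝ) : EReal))
          Filter.atTop = ((Real.sqrt 5 : ℝ) : EReal) ↔
        ∀ᶠ k in Filter.atTop, a k = 1) := by
  refine ⟨sqrt_five_le_limsup_lagrangeTerm ha, fun hlim => ?_, fun hev => ?_⟩
  · have hsqrt : √5 < 5 / 2 := by
      rw [Real.sqrt_lt' (by norm_num)]; norm_num
    exact eventually_eq_one_of_limsup_lt ha (hlim ▸ EReal.coe_lt_coe_iff.2 hsqrt)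
  · exact (EReal.tendsto_coe.2 (tendsto_lagrangeTerm_of_eventually_eq_one ha hev)).limsup_eq
end

section
/- If two uniquely ergodic minimal symbolic dynamical systems are topologically conjugate, then they have the same values of ℬ = limsup_{n→∞} 1/(n·eₙ) and ℬ' = liminf_{n→∞} 1/(n·eₙ). -/
/-!
A topological conjugacy and its inverse are sliding block codes (Curtis–Hedlund–Lyndon) with some
window `r`, and each pushes the unique invariant measure of its domain to that of its target.
So the preimage of a positive `n`-cylinder has positive measure, is covered by `(n + r)`-cylinders,
and any of them meeting it lies inside it up to a null set: `e_{n+r} ≤ e'_n`, and symmetrically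
`e'_{n+s} ≤ e_n`. Since `(n + r) / n → 1`, the sequences `1 / (n eₙ)` and `1 / (n e'ₙ)` then have
the same `limsup` and `liminf`.
-/

open Filter MeasureTheory

/-- The cylinder of a word `w` of length `n`. -/
def cylSet {A : Type*} (n : ℕ) (w : Fin n → A) : Set (ℕ → A) :=
  {x | ∀ i : Fin n, x (i : ℕ) = w i}

/-- `eₙ`: the smallest positive measure of a cylinder of length `n`. -/
noncomputable def minFreq {A : Type*} [MeasurableSpace A]
    (μ : Measure (ℕ → A)) (n : ℕ) : ℝ :=
  (⨅ w : {w : Fin n → A // 0 < μ (cylSet n w)}, μ (cylSet n w.1)).toReal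

/-- complexity: the number of words of length `n` whose cylinder has positive measure. -/
noncomputable def cplx {A : Type*} [MeasurableSpace A]
    (μ : Measure (ℕ → A)) (n : ℕ) : ℕ :=
  Set.ncard {w : Fin n → A | 0 < μ (cylSet n w)}

/-- the shift map. -/
def shiftMap {A : Type*} : (ℕ → A) → (ℕ → A) := fun x n => x (n + 1)

open Set Topology

section Cylinders

variable {A : Type*}

lemma iterate_shiftMap_apply (j : ℕ) (z : ℕ → A) (i : ℕ) : shiftMap^[j] z i = z (i + j) := by
  induction j generalizing z with
  | zero => rfl
  | succ j ih => rw [Function.iterate_succ_apply, ih]; rfl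

lemma measurable_shiftMap [MeasurableSpace A] : Measurable (shiftMap : (ℕ → A) → ℕ → A) :=
  measurable_pi_iff.mpr fun n => measurable_pi_apply (n + 1)

lemma measurableSet_cylSet [MeasurableSpace A] [MeasurableSingletonClass A] (n : ℕ)
    (w : Fin n → A) : MeasurableSet (cylSet n w) := by
  simp only [cylSet, ofPred_forall]
  exact .iInter fun i => (measurableSet_singleton (w i)).preimage (measurable_pi_apply (i : ℕ))

lemma isOpen_cylSet [TopologicalSpace A] [DiscreteTopology A] (n : ℕ) (w : Fin n → A) :
    IsOpen (cylSet n w) := by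
  simp only [cylSet, ofPred_forall]
  exact isOpen_iInter_of_finite fun i =>
    (isOpen_discrete {w i}).preimage (continuous_apply (A := fun _ => A) (i : ℕ))

lemma exists_cylSet_subset_of_mem_nhds [TopologicalSpace A] [DiscreteTopology A]
    {x : ℕ → A} {U : Set (ℕ → A)} (hU : U ∈ 𝓝 x) : ∃ m, cylSet m (fun i => x i) ⊆ U := by
  rw [nhds_pi, Filter.mem_pi] at hU
  obtain ⟨I, hI, t, ht, hsub⟩ := hU
  obtain ⟨m, hm⟩ := hI.bddAbove
  refine ⟨m + 1, fun z hz => hsub fun i hi => ?_⟩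
  rw [hz ⟨i, Nat.lt_succ_of_le (hm hi)⟩]
  exact mem_of_mem_nhds (ht i)

end Cylinders

section InverseScaledFrequencies

variable {a b : ℕ → ℝ} {r : ℕ}

lemma one_div_mul_le_of_le_shift (hb : ∀ n, 0 < b n) (h : ∀ n, b (n + r) ≤ a n) (n : ℕ) :
    ((1 / (n * a n) : ℝ) : EReal) ≤
      ((1 + r / n : ℝ) : EReal) * ((1 / ((n + r : ℕ) * b (n + r)) : ℝ) : EReal) := by
  rw [← EReal.coe_mul, EReal.coe_le_coe_iff]
  have hbn := hb (n + r)
  rcases n.eq_zero_or_pos with rfl | hn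
  -- at `n = 0` both `1 / (n * a n)` and `r / n` are junk zeros
  · simp only [CharP.cast_eq_zero, zero_mul, div_zero, add_zero, one_mul, zero_add] at hbn ⊢
    exact one_div_nonneg.mpr (mul_nonneg r.cast_nonneg hbn.le)
  have hn' : (0 : ℝ) < n := Nat.cast_pos.mpr hn
  calc 1 / (n * a n) ≤ 1 / (n * b (n + r)) :=
        one_div_le_one_div_of_le (by positivity) (mul_le_mul_of_nonneg_left (h n) hn'.le)
    _ = (1 + r / n) * (1 / ((n + r : ℕ) * b (n + r))) := by
        push_cast
        field_simp

lemma tendsto_one_add_div_atTop (r : ℕ) :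
    Tendsto (fun n : ℕ => ((1 + r / n : ℝ) : EReal)) atTop (𝓝 1) := by
  have h := (tendsto_const_div_atTop_nhds_zero_nat (r : ℝ)).const_add 1
  rw [add_zero] at h
  rw [← EReal.coe_one]
  exact EReal.tendsto_coe.mpr h

lemma limsup_one_div_mul_le (hb : ∀ n, 0 < b n) (h : ∀ n, b (n + r) ≤ a n) :
    limsup (fun n : ℕ => ((1 / (n * a n) : ℝ) : EReal)) atTop
      ≤ limsup (fun n : ℕ => ((1 / (n * b n) : ℝ) : EReal)) atTop := by
  set c : ℕ → EReal := fun n => ((1 + r / n : ℝ) : EReal)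
  set w : ℕ → EReal := fun n => ((1 / ((n + r : ℕ) * b (n + r)) : ℝ) : EReal)
  have hc : limsup c atTop = 1 := (tendsto_one_add_div_atTop r).limsup_eq
  have hc0 : ∀ n, 0 ≤ c n := fun n => EReal.coe_nonneg.mpr (by positivity)
  have hw0 : ∀ n, 0 ≤ w n := fun n => EReal.coe_nonneg.mpr (by have := hb (n + r); positivity)
  calc _ ≤ limsup (c * w) atTop :=
        limsup_le_limsup (.of_forall (one_div_mul_le_of_le_shift hb h))
    _ ≤ limsup c atTop * limsup w atTop :=
        EReal.limsup_mul_le (.of_forall hc0) (.of_forall hw0) (by simp [hc])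
          (.inl (hc ▸ EReal.coe_ne_top 1))
    _ = _ := by rw [hc, one_mul]; exact limsup_nat_add (fun n => ((1 / (n * b n) : ℝ) : EReal)) r

lemma liminf_one_div_mul_le (hb : ∀ n, 0 < b n) (h : ∀ n, b (n + r) ≤ a n) :
    liminf (fun n : ℕ => ((1 / (n * a n) : ℝ) : EReal)) atTop
      ≤ liminf (fun n : ℕ => ((1 / (n * b n) : ℝ) : EReal)) atTop := by
  set c : ℕ → EReal := fun n => ((1 + r / n : ℝ) : EReal)
  set w : ℕ → EReal := fun n => ((1 / ((n + r : ℕ) * b (n + r)) : ℝ) : EReal)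
  have hc : limsup c atTop = 1 := (tendsto_one_add_div_atTop r).limsup_eq
  have hc0 : ∀ n, 0 ≤ c n := fun n => EReal.coe_nonneg.mpr (by positivity)
  have hw0 : ∀ n, 0 ≤ w n := fun n => EReal.coe_nonneg.mpr (by have := hb (n + r); positivity)
  calc _ ≤ liminf (c * w) atTop :=
        liminf_le_liminf (.of_forall (one_div_mul_le_of_le_shift hb h))
    _ ≤ limsup c atTop * liminf w atTop :=
        EReal.liminf_mul_le (.of_forall hc0) (.of_forall hw0) (by simp [hc])
          (.inl (hc ▸ EReal.coe_ne_top 1))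
    _ = _ := by rw [hc, one_mul]; exact liminf_nat_add (fun n => ((1 / (n * b n) : ℝ) : EReal)) r

end InverseScaledFrequencies

section SlidingBlockCode

variable {A B : Type*} [TopologicalSpace A] [DiscreteTopology A] [TopologicalSpace B]
  [DiscreteTopology B] {X : Set (ℕ → A)}

lemma IsCompact.exists_radius_of_continuousOn (hX : IsCompact X) {g : (ℕ → A) → B}
    (hg : ContinuousOn g X) :
    ∃ r, ∀ x ∈ X, ∀ x' ∈ X, (∀ i < r, x i = x' i) → g x = g x' := by
  have hloc : ∀ x ∈ X, ∃ m, ∀ z ∈ cylSet m (fun i => x i) ∩ X, g z = g x := by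
    intro x hx
    obtain ⟨U, hU, hUX⟩ := mem_nhdsWithin_iff_exists_mem_nhds_inter.mp
      (hg x hx ((isOpen_discrete {g x}).mem_nhds rfl))
    obtain ⟨m, hm⟩ := exists_cylSet_subset_of_mem_nhds hU
    exact ⟨m, fun z hz => hUX ⟨hm hz.1, hz.2⟩⟩
  choose! m hm using hloc
  obtain ⟨t, htX, hcover⟩ := hX.elim_nhds_subcover (fun x => cylSet (m x) (fun i => x i))
    fun x _ => (isOpen_cylSet _ _).mem_nhds fun _ => rfl
  refine ⟨t.sup m, fun x hx x' hx' hxx' => ?_⟩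
  obtain ⟨c, hct, hxc⟩ := mem_iUnion₂.mp (hcover hx)
  have hx'c : x' ∈ cylSet (m c) (fun i => c i) := fun i =>
    (hxx' i (i.2.trans_le (Finset.le_sup hct))).symm.trans (hxc i)
  rw [hm c (htX c hct) x ⟨hxc, hx⟩, hm c (htX c hct) x' ⟨hx'c, hx'⟩]

lemma IsCompact.exists_slidingBlock_radius (hX : IsCompact X) (hSX : MapsTo shiftMap X X)
    {Φ : (ℕ → A) → ℕ → B} (hΦ : ContinuousOn Φ X)
    (hcomm : ∀ x ∈ X, Φ (shiftMap x) = shiftMap (Φ x)) :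
    ∃ r, ∀ n, ∀ x ∈ X, ∀ x' ∈ X, (∀ i < n + r, x i = x' i) → ∀ j < n, Φ x j = Φ x' j := by
  obtain ⟨r, hr⟩ := hX.exists_radius_of_continuousOn ((continuous_apply 0).comp_continuousOn hΦ)
  have hiter : ∀ j, ∀ x ∈ X, Φ (shiftMap^[j] x) = shiftMap^[j] (Φ x) := by
    intro j
    induction j with
    | zero => exact fun _ _ => rfl
    | succ j ih =>
      intro x hx
      rw [Function.iterate_succ_apply', Function.iterate_succ_apply',
        hcomm _ (hSX.iterate j hx), ih x hx]
  refine ⟨r, fun n x hx x' hx' hxx' j hj => ?_⟩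
  have hshift := hr _ (hSX.iterate j hx) _ (hSX.iterate j hx') fun i hi => by
    simp only [iterate_shiftMap_apply]
    exact hxx' _ (by omega)
  simpa [hiter j x hx, hiter j x' hx', iterate_shiftMap_apply] using hshift

end SlidingBlockCode

section Frequencies

variable {A B : Type*} [MeasurableSpace A] [MeasurableSpace B]

lemma exists_measure_cylSet_pos [Countable A] (μ : Measure (ℕ → A)) [NeZero μ] (n : ℕ) :
    ∃ w : Fin n → A, 0 < μ (cylSet n w) := by
  by_contra! h
  have hcover : ⋃ w : Fin n → A, cylSet n w = univ :=
    iUnion_eq_univ_iff.mpr fun x => ⟨fun i => x i, fun _ => rfl⟩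
  apply NeZero.ne μ
  rw [← Measure.measure_univ_eq_zero, ← hcover]
  exact measure_iUnion_null fun w => nonpos_iff_eq_zero.mp (h w)

lemma minFreq_pos [Finite A] (μ : Measure (ℕ → A)) [IsProbabilityMeasure μ] (n : ℕ) :
    0 < minFreq μ n := by
  obtain ⟨w₀, hw₀⟩ := exists_measure_cylSet_pos μ n
  have : Nonempty {w : Fin n → A // 0 < μ (cylSet n w)} := ⟨⟨w₀, hw₀⟩⟩
  obtain ⟨w, hw⟩ := exists_eq_ciInf_of_finite
    (f := fun w : {w : Fin n → A // 0 < μ (cylSet n w)} => μ (cylSet n w.1))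
  rw [minFreq, ← hw]
  exact ENNReal.toReal_pos w.2.ne' (measure_ne_top μ _)

lemma minFreq_le_minFreq [Countable B] {μ : Measure (ℕ → A)} {ν : Measure (ℕ → B)}
    [IsProbabilityMeasure ν] {m n : ℕ}
    (h : ∀ w : Fin n → B, 0 < ν (cylSet n w) →
      ∃ u : Fin m → A, 0 < μ (cylSet m u) ∧ μ (cylSet m u) ≤ ν (cylSet n w)) :
    minFreq μ m ≤ minFreq ν n := by
  obtain ⟨w₀, hw₀⟩ := exists_measure_cylSet_pos ν n
  refine ENNReal.toReal_mono (ne_top_of_le_ne_top (measure_ne_top ν (cylSet n w₀))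
    (iInf_le_of_le ⟨w₀, hw₀⟩ le_rfl)) (le_iInf fun w => ?_)
  obtain ⟨u, hu, huw⟩ := h w.1 w.2
  exact iInf_le_of_le ⟨u, hu⟩ huw

lemma minFreq_add_le_of_map_eq [Finite A] [Finite B] [MeasurableSingletonClass B]
    {X : Set (ℕ → A)} (hX : MeasurableSet X)
    {μ : Measure (ℕ → A)} [IsProbabilityMeasure μ] (hμX : μ X = 1)
    {ν : Measure (ℕ → B)} [IsProbabilityMeasure ν] {Φ : (ℕ → A) → ℕ → B} (hΦ : Measurable Φ)
    (hmap : μ.map Φ = ν) {n r : ℕ}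
    (hblock : ∀ x ∈ X, ∀ x' ∈ X, (∀ i < n + r, x i = x' i) → ∀ j < n, Φ x j = Φ x' j) :
    minFreq μ (n + r) ≤ minFreq ν n := by
  have hXc : μ Xᶜ = 0 := mem_ae_iff.mp ((mem_ae_iff_prob_eq_one hX).mpr hμX)
  refine minFreq_le_minFreq fun w hw => ?_
  rw [← hmap, Measure.map_apply hΦ (measurableSet_cylSet n w)] at hw ⊢
  obtain ⟨u, hu⟩ : ∃ u : Fin (n + r) → A, 0 < μ (cylSet (n + r) u ∩ (Φ ⁻¹' cylSet n w ∩ X)) := by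
    by_contra! h
    rw [← measure_inter_conull hXc] at hw
    refine hw.ne' (measure_mono_null (fun x hx => ?_) (measure_iUnion_null fun u =>
      nonpos_iff_eq_zero.mp (h u)))
    exact mem_iUnion.mpr ⟨fun i => x i, fun _ => rfl, hx⟩
  obtain ⟨x₀, hx₀u, hx₀w, hx₀X⟩ := nonempty_of_measure_ne_zero hu.ne'
  refine ⟨u, hu.trans_le (measure_mono inter_subset_left), ?_⟩
  calc μ (cylSet (n + r) u) = μ (cylSet (n + r) u ∩ X) := (measure_inter_conull hXc).symm
    _ ≤ μ (Φ ⁻¹' cylSet n w) := measure_mono fun x ⟨hxu, hxX⟩ j => by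
      rw [hblock x hxX x₀ hx₀X (fun i hi => (hxu ⟨i, hi⟩).trans (hx₀u ⟨i, hi⟩).symm) j j.2]
      exact hx₀w j

lemma map_eq_of_shiftMap_comm {X : Set (ℕ → A)} {Y : Set (ℕ → B)} (hX : MeasurableSet X)
    (hY : MeasurableSet Y) {μ : Measure (ℕ → A)} [IsProbabilityMeasure μ] (hμX : μ X = 1)
    (hμinv : ∀ s : Set (ℕ → A), MeasurableSet s → μ (shiftMap ⁻¹' s) = μ s)
    {ν : Measure (ℕ → B)}
    (hνuniq : ∀ ν' : Measure (ℕ → B), IsProbabilityMeasure ν' → ν' Y = 1 →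
      (∀ s : Set (ℕ → B), MeasurableSet s → ν' (shiftMap ⁻¹' s) = ν' s) → ν' = ν)
    {Φ : (ℕ → A) → ℕ → B} (hΦ : Measurable Φ) (hΦY : ∀ x, Φ x ∈ Y)
    (hcomm : ∀ x ∈ X, Φ (shiftMap x) = shiftMap (Φ x)) :
    μ.map Φ = ν := by
  refine hνuniq _ (Measure.isProbabilityMeasure_map hΦ.aemeasurable) ?_ fun s hs => ?_
  · rw [Measure.map_apply hΦ hY, show Φ ⁻¹' Y = univ from eq_univ_of_forall hΦY, measure_univ]
  rw [Measure.map_apply hΦ (measurable_shiftMap hs), Measure.map_apply hΦ hs,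
    ← hμinv _ (hΦ hs)]
  refine measure_congr ?_
  filter_upwards [(mem_ae_iff_prob_eq_one hX).mpr hμX] with x hx
  show (shiftMap (Φ x) ∈ s) = (Φ (shiftMap x) ∈ s)
  rw [hcomm x hx]

end Frequencies

theorem exists_minFreq_add_le_of_semiconj {A B : Type*} [Finite A] [Finite B]
    [MeasurableSpace A] [MeasurableSingletonClass A] [MeasurableSpace B]
    [MeasurableSingletonClass B] [TopologicalSpace A] [DiscreteTopology A]
    [TopologicalSpace B] [DiscreteTopology B] {X : Set (ℕ → A)} {Y : Set (ℕ → B)}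
    (hXcl : IsClosed X) (hYcl : IsClosed Y) (hSX : MapsTo shiftMap X X)
    (hSY : MapsTo shiftMap Y Y) {μ : Measure (ℕ → A)} [IsProbabilityMeasure μ] (hμX : μ X = 1)
    (hμinv : ∀ s : Set (ℕ → A), MeasurableSet s → μ (shiftMap ⁻¹' s) = μ s)
    {ν : Measure (ℕ → B)} [IsProbabilityMeasure ν]
    (hνuniq : ∀ ν' : Measure (ℕ → B), IsProbabilityMeasure ν' → ν' Y = 1 →
      (∀ s : Set (ℕ → B), MeasurableSet s → ν' (shiftMap ⁻¹' s) = ν' s) → ν' = ν)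
    {f : X → Y} (hf : Continuous f)
    (hfS : Function.Semiconj f (hSX.restrict _ _ _) (hSY.restrict _ _ _)) :
    ∃ r, ∀ n, minFreq μ (n + r) ≤ minFreq ν n := by
  classical
  obtain ⟨x₀, hx₀⟩ := nonempty_of_measure_ne_zero (hμX.trans_ne one_ne_zero)
  let Φ : (ℕ → A) → ℕ → B := fun x => if h : x ∈ X then f ⟨x, h⟩ else f ⟨x₀, hx₀⟩
  have hΦX : ∀ x (h : x ∈ X), Φ x = f ⟨x, h⟩ := fun x h => dif_pos h
  have hΦcont : ContinuousOn Φ X := by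
    rw [continuousOn_iff_continuous_domRestrict]
    convert continuous_subtype_val.comp hf using 1
    exact funext fun x => hΦX x x.2
  have hΦmeas : Measurable Φ :=
    (continuous_subtype_val.comp hf).measurable.dite measurable_const hXcl.measurableSet
  have hcomm : ∀ x ∈ X, Φ (shiftMap x) = shiftMap (Φ x) := fun x hx => by
    rw [hΦX _ (hSX hx), hΦX x hx]
    exact congrArg Subtype.val (hfS ⟨x, hx⟩)
  obtain ⟨r, hr⟩ := hXcl.isCompact.exists_slidingBlock_radius hSX hΦcont hcomm
  have hmap := map_eq_of_shiftMap_comm hXcl.measurableSet hYcl.measurableSet hμX hμinv hνuniq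
    hΦmeas (fun x => by dsimp only [Φ]; split_ifs <;> exact (f _).2) hcomm
  exact ⟨r, fun n => minFreq_add_le_of_map_eq hXcl.measurableSet hμX hΦmeas hmap (hr n)⟩

theorem stmt11_general {A B : Type*} [Fintype A] [Fintype B]
    [MeasurableSpace A] [MeasurableSingletonClass A]
    [MeasurableSpace B] [MeasurableSingletonClass B]
    [TopologicalSpace A] [DiscreteTopology A]
    [TopologicalSpace B] [DiscreteTopology B]
    (X : Set (ℕ → A)) (Y : Set (ℕ → B))
    (hXcl : IsClosed X) (hYcl : IsClosed Y)
    (hSX : ∀ x ∈ X, shiftMap x ∈ X) (hSY : ∀ y ∈ Y, shiftMap y ∈ Y)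
    -- μ and ν are the unique shift-invariant probability measures on X and Y
    (μ : Measure (ℕ → A)) [IsProbabilityMeasure μ] (hμX : μ X = 1)
    (hμinv : ∀ s : Set (ℕ → A), MeasurableSet s → μ (shiftMap ⁻¹' s) = μ s)
    (hμuniq : ∀ μ' : Measure (ℕ → A), IsProbabilityMeasure μ' → μ' X = 1 →
      (∀ s : Set (ℕ → A), MeasurableSet s → μ' (shiftMap ⁻¹' s) = μ' s) → μ' = μ)
    (ν : Measure (ℕ → B)) [IsProbabilityMeasure ν] (hνY : ν Y = 1)
    (hνinv : ∀ s : Set (ℕ → B), MeasurableSet s → ν (shiftMap ⁻¹' s) = ν s)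
    (hνuniq : ∀ ν' : Measure (ℕ → B), IsProbabilityMeasure ν' → ν' Y = 1 →
      (∀ s : Set (ℕ → B), MeasurableSet s → ν' (shiftMap ⁻¹' s) = ν' s) → ν' = ν)
    -- a topological conjugacy between (X, shift) and (Y, shift)
    (φ : X ≃ₜ Y)
    (hφ : ∀ x : X, (φ ⟨shiftMap (x : ℕ → A), hSX x x.2⟩ : ℕ → B)
      = shiftMap ((φ x : ℕ → B))) :
    Filter.limsup (fun n : ℕ => ((1 / ((n : ℝ) * minFreq μ n) : ℝ) : EReal)) Filter.atTop
      = Filter.limsup (fun n : ℕ => ((1 / ((n : ℝ) * minFreq ν n) : ℝ) : EReal))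
          Filter.atTop ∧
    Filter.liminf (fun n : ℕ => ((1 / ((n : ℝ) * minFreq μ n) : ℝ) : EReal)) Filter.atTop
      = Filter.liminf (fun n : ℕ => ((1 / ((n : ℝ) * minFreq ν n) : ℝ) : EReal))
          Filter.atTop := by
  have hφS : Function.Semiconj φ (MapsTo.restrict shiftMap X X hSX)
      (MapsTo.restrict shiftMap Y Y hSY) := fun x => Subtype.ext (hφ x)
  obtain ⟨r, hr⟩ := exists_minFreq_add_le_of_semiconj hXcl hYcl hSX hSY hμX hμinv hνuniq
    φ.continuous hφS
  obtain ⟨s, hs⟩ := exists_minFreq_add_le_of_semiconj hYcl hXcl hSY hSX hνY hνinv hμuniq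
    φ.symm.continuous (hφS.inverse_left φ.left_inv φ.right_inv)
  exact ⟨(limsup_one_div_mul_le (minFreq_pos ν) hs).antisymm
      (limsup_one_div_mul_le (minFreq_pos μ) hr),
    (liminf_one_div_mul_le (minFreq_pos ν) hs).antisymm (liminf_one_div_mul_le (minFreq_pos μ) hr)⟩

/-- ℬ and ℬ' are invariants of topological conjugacy among uniquely ergodic
minimal symbolic systems. -/
theorem stmt11 {A B : Type*} [Fintype A] [Fintype B]
    [MeasurableSpace A] [MeasurableSingletonClass A]
    [MeasurableSpace B] [MeasurableSingletonClass B]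
    [TopologicalSpace A] [DiscreteTopology A]
    [TopologicalSpace B] [DiscreteTopology B]
    (X : Set (ℕ → A)) (Y : Set (ℕ → B)) (hXne : X.Nonempty) (hYne : Y.Nonempty)
    (hXcl : IsClosed X) (hYcl : IsClosed Y)
    (hSX : ∀ x ∈ X, shiftMap x ∈ X) (hSY : ∀ y ∈ Y, shiftMap y ∈ Y)
    -- minimality
    (hminX : ∀ x ∈ X, closure {z : ℕ → A | ∃ n : ℕ, z = shiftMap^[n] x} = X)
    (hminY : ∀ y ∈ Y, closure {z : ℕ → B | ∃ n : ℕ, z = shiftMap^[n] y} = Y)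
    -- μ and ν are the unique shift-invariant probability measures on X and Y
    (μ : Measure (ℕ → A)) [IsProbabilityMeasure μ] (hμX : μ X = 1)
    (hμinv : ∀ s : Set (ℕ → A), MeasurableSet s → μ (shiftMap ⁻¹' s) = μ s)
    (hμuniq : ∀ μ' : Measure (ℕ → A), IsProbabilityMeasure μ' → μ' X = 1 →
      (∀ s : Set (ℕ → A), MeasurableSet s → μ' (shiftMap ⁻¹' s) = μ' s) → μ' = μ)
    (ν : Measure (ℕ → B)) [IsProbabilityMeasure ν] (hνY : ν Y = 1)
    (hνinv : ∀ s : Set (ℕ → B), MeasurableSet s → ν (shiftMap ⁻¹' s) = ν s)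
    (hνuniq : ∀ ν' : Measure (ℕ → B), IsProbabilityMeasure ν' → ν' Y = 1 →
      (∀ s : Set (ℕ → B), MeasurableSet s → ν' (shiftMap ⁻¹' s) = ν' s) → ν' = ν)
    -- a topological conjugacy between (X, shift) and (Y, shift)
    (φ : X ≃ₜ Y)
    (hφ : ∀ x : X, (φ ⟨shiftMap (x : ℕ → A), hSX x x.2⟩ : ℕ → B)
      = shiftMap ((φ x : ℕ → B))) :
    Filter.limsup (fun n : ℕ => ((1 / ((n : ℝ) * minFreq μ n) : ℝ) : EReal)) Filter.atTop
      = Filter.limsup (fun n : ℕ => ((1 / ((n : ℝ) * minFreq ν n) : ℝ) : EReal))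
          Filter.atTop ∧
    Filter.liminf (fun n : ℕ => ((1 / ((n : ℝ) * minFreq μ n) : ℝ) : EReal)) Filter.atTop
      = Filter.liminf (fun n : ℕ => ((1 / ((n : ℝ) * minFreq ν n) : ℝ) : EReal))
          Filter.atTop :=
  stmt11_general X Y hXcl hYcl hSX hSY μ hμX hμinv hμuniq ν hνY hνinv hνuniq φ hφ
end

section
/- Suppose (bₖ) is eventually periodic with period pattern such that the limsup of bₖ + v_{k-1} + tₖ is attained along a periodic subsequence; then the value of limsup_{k→∞}(bₖ + v_{k-1} + tₖ) is a quadratic irrational (i.e., lies in a real quadratic field). In particular, for eventually periodic continued fractions the corresponding element of the Lagrange spectrum is quadratic over ℚ. -/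
open Filter

/-!
The word matrix `∏ !![0, 1; 1, d]` (over the digits `d` of `l`) acts by Möbius transformations and
turns `cfFin m` into `cfFin (l ++ m)`. Its determinant is `±1` and its bottom-right entry grows at
least linearly in the length of `l`, so continued fractions sharing a long prefix are close.
Hence, along each residue class `k = K + n p` with `K ≥ N`, the term `a k + cfV a k + cfT a (k + 1)`
converges to `a K + w + t` with `w`, `t` purely periodic continued fractions, and the limsup is the
largest of these `p` limits.

A purely periodic continued fraction is a fixed point of the Möbius map of its period word, so it
lies in `ℚ(√D)` with `D = tr² - 4 det` of that word's matrix. The period words of `w` and `t` are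
the reverse and a cyclic rotation of `a K, …, a (K + p - 1)`; neither changes trace or determinant,
so `w`, `t` and `a K + w + t` all lie in the same real quadratic field.
-/

open Matrix Topology

lemma eventually_atTop_of_residue_classes {P : ℕ → Prop} {N p : ℕ} (hp : 0 < p)
    (h : ∀ r < p, ∀ᶠ n in atTop, P (N + r + n * p)) : ∀ᶠ k in atTop, P k := by
  obtain ⟨n₀, hn₀⟩ := eventually_atTop.1 ((eventually_all_finite (Set.finite_Iio p)).2 h)
  refine eventually_atTop.2 ⟨N + n₀ * p, fun k hk => ?_⟩
  have hdiv : n₀ ≤ (k - N) / p := (Nat.le_div_iff_mul_le hp).2 (by omega)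
  have hk : k = N + (k - N) % p + (k - N) / p * p := by
    have := Nat.mod_add_div (k - N) p
    rw [Nat.mul_comm] at this
    omega
  rw [hk]
  exact hn₀ _ hdiv _ (Nat.mod_lt _ hp)

lemma tendsto_add_mul_atTop (K : ℕ) {p : ℕ} (hp : 0 < p) :
    Tendsto (fun n => K + n * p) atTop atTop :=
  tendsto_atTop_mono (fun n => (Nat.le_mul_of_pos_right n hp).trans (Nat.le_add_left _ _))
    tendsto_id

lemma limsup_eq_of_tendsto_residue_classes {f : ℕ → ℝ} {N p : ℕ} (hp : 0 < p) {L : ℕ → ℝ}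
    (h : ∀ r < p, Tendsto (fun n => f (N + r + n * p)) atTop (𝓝 (L r))) :
    ∃ r < p, limsup f atTop = L r := by
  obtain ⟨r₀, hr₀, hmax⟩ := Finset.exists_max_image (Finset.range p) L ⟨0, by simpa⟩
  rw [Finset.mem_range] at hr₀
  have upper : ∀ ε > 0, ∀ᶠ k in atTop, f k ≤ L r₀ + ε := fun ε hε =>
    eventually_atTop_of_residue_classes hp fun r hr =>
      ((h r hr).eventually (eventually_le_nhds (lt_add_of_pos_right _ hε))).mono fun _ hn =>
        hn.trans (by linarith [hmax r (Finset.mem_range.2 hr)])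
  have lower : ∀ ε > 0, ∃ᶠ k in atTop, L r₀ - ε ≤ f k := fun ε hε =>
    (tendsto_add_mul_atTop (N + r₀) hp).frequently
      ((h r₀ hr₀).eventually (eventually_ge_nhds (sub_lt_self _ hε))).frequently
  refine ⟨r₀, hr₀, le_antisymm ?_ ?_⟩
  · exact le_of_forall_pos_le_add fun ε hε =>
      limsup_le_of_le (IsCoboundedUnder.of_frequently_ge (lower 1 one_pos)) (upper ε hε)
  · exact le_of_forall_sub_le fun ε hε =>
      le_limsup_of_frequently_le (lower ε hε) (isBoundedUnder_of_eventually_le (upper 1 one_pos))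

lemma exists_rat_eq_add_mul_of_quadratic {A B C : ℤ} (hA : A ≠ 0) {x s : ℝ}
    (hx : A * x ^ 2 + B * x + C = 0) (hs : s ^ 2 = B ^ 2 - 4 * A * C) :
    ∃ q r : ℚ, x = q + r * s := by
  have hA' : (A : ℝ) ≠ 0 := Int.cast_ne_zero.2 hA
  have hsq : (2 * A * x + B) ^ 2 = s ^ 2 := by rw [hs]; linear_combination 4 * (A : ℝ) * hx
  refine ⟨-B / (2 * A), ?_⟩
  rcases sq_eq_sq_iff_eq_or_eq_neg.1 hsq with h | h
  · refine ⟨1 / (2 * A), ?_⟩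
    push_cast
    field_simp
    linear_combination h
  · refine ⟨-1 / (2 * A), ?_⟩
    push_cast
    field_simp
    linear_combination h

lemma exists_quadratic_of_eq_add_mul {x s : ℝ} {D : ℚ} (hs : s ^ 2 = D) {q r : ℚ}
    (hx : x = q + r * s) : ∃ A B C : ℚ, (A ≠ 0 ∨ B ≠ 0) ∧ A * x ^ 2 + B * x + C = 0 :=
  ⟨1, -2 * q, q ^ 2 - r ^ 2 * D, Or.inl one_ne_zero, by
    rw [hx]; push_cast; linear_combination (r : ℝ) ^ 2 * hs⟩

-- `1 / (d + x)` is the Möbius transformation of `digitMatrix d`.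
def digitMatrix (d : ℕ) : Matrix (Fin 2) (Fin 2) ℤ := !![0, 1; 1, (d : ℤ)]

def wordMatrix (l : List ℕ) : Matrix (Fin 2) (Fin 2) ℤ := (l.map digitMatrix).prod

def wordDisc (l : List ℕ) : ℤ := (wordMatrix l).trace ^ 2 - 4 * (wordMatrix l).det

noncomputable def moebius (M : Matrix (Fin 2) (Fin 2) ℤ) (x : ℝ) : ℝ :=
  ((M 0 0 : ℝ) * x + M 0 1) / ((M 1 0 : ℝ) * x + M 1 1)

@[simp] lemma wordMatrix_nil : wordMatrix [] = 1 := rfl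

lemma wordMatrix_append (l m : List ℕ) : wordMatrix (l ++ m) = wordMatrix l * wordMatrix m := by
  simp [wordMatrix]

lemma wordMatrix_cons_apply (d : ℕ) (l : List ℕ) :
    wordMatrix (d :: l) 0 0 = wordMatrix l 1 0 ∧ wordMatrix (d :: l) 0 1 = wordMatrix l 1 1 ∧
    wordMatrix (d :: l) 1 0 = wordMatrix l 0 0 + d * wordMatrix l 1 0 ∧
    wordMatrix (d :: l) 1 1 = wordMatrix l 0 1 + d * wordMatrix l 1 1 := by
  simp [wordMatrix, digitMatrix, Matrix.mul_apply, Fin.sum_univ_two]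

lemma wordMatrix_nonneg (l : List ℕ) (i j : Fin 2) : 0 ≤ wordMatrix l i j := by
  induction l generalizing i j with
  | nil => simp [Matrix.one_apply]; split_ifs <;> simp
  | cons d l ih =>
    obtain ⟨h00, h01, h10, h11⟩ := wordMatrix_cons_apply d l
    fin_cases i <;> fin_cases j <;> simp only [Fin.zero_eta, Fin.mk_one, h00, h01, h10, h11]
    all_goals first | exact ih _ _ | exact add_nonneg (ih _ _) (mul_nonneg d.cast_nonneg (ih _ _))

lemma one_le_wordMatrix_zero_zero_add_one_zero (l : List ℕ) :
    1 ≤ wordMatrix l 0 0 + wordMatrix l 1 0 := by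
  induction l with
  | nil => simp
  | cons d l ih =>
    obtain ⟨h00, -, h10, -⟩ := wordMatrix_cons_apply d l
    rw [h00, h10]
    nlinarith [wordMatrix_nonneg l 1 0, d.cast_nonneg (α := ℤ)]

lemma one_le_wordMatrix_cons_one_zero {d : ℕ} (hd : 1 ≤ d) (l : List ℕ) :
    1 ≤ wordMatrix (d :: l) 1 0 := by
  rw [(wordMatrix_cons_apply d l).2.2.1]
  have hd' : (1 : ℤ) ≤ d := by exact_mod_cast hd
  nlinarith [wordMatrix_nonneg l 1 0, one_le_wordMatrix_zero_zero_add_one_zero l]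

lemma wordMatrix_one_one_growth {l : List ℕ} (hl : ∀ d ∈ l, 1 ≤ d) :
    1 ≤ wordMatrix l 1 1 ∧ (l.length : ℤ) ≤ wordMatrix l 1 1 ∧
      (l.length : ℤ) + 1 ≤ wordMatrix l 0 1 + wordMatrix l 1 1 := by
  induction l with
  | nil => simp
  | cons d l ih =>
    obtain ⟨h1, hlen, hsum⟩ := ih fun x hx => hl x (List.mem_cons_of_mem d hx)
    have hd : (1 : ℤ) ≤ d := by exact_mod_cast hl d List.mem_cons_self
    obtain ⟨-, h01, -, h11⟩ := wordMatrix_cons_apply d l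
    have h0 := wordMatrix_nonneg l 0 1
    rw [h01, h11, List.length_cons, Nat.cast_succ]
    refine ⟨by nlinarith, by nlinarith, by nlinarith⟩

lemma wordMatrix_det (l : List ℕ) : (wordMatrix l).det = (-1) ^ l.length := by
  induction l with
  | nil => simp
  | cons d l ih =>
    rw [← List.singleton_append, wordMatrix_append, det_mul, ih]
    simp [wordMatrix, digitMatrix, pow_succ']

lemma wordMatrix_reverse (l : List ℕ) : wordMatrix l.reverse = (wordMatrix l)ᵀ := by
  have hsymm : ∀ d, (digitMatrix d)ᵀ = digitMatrix d := fun d => by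
    ext i j; fin_cases i <;> fin_cases j <;> rfl
  simp [wordMatrix, transpose_list_prod, Function.comp_def, hsymm]

lemma wordDisc_reverse (l : List ℕ) : wordDisc l.reverse = wordDisc l := by
  simp [wordDisc, wordMatrix_reverse]

lemma wordDisc_append_comm (l m : List ℕ) : wordDisc (l ++ m) = wordDisc (m ++ l) := by
  simp only [wordDisc, wordMatrix_append, trace_mul_comm (wordMatrix l), det_mul, mul_comm]

lemma wordDisc_nonneg (l : List ℕ) : 0 ≤ wordDisc l := by
  rw [wordDisc, Matrix.trace_fin_two, Matrix.det_fin_two]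
  nlinarith [wordMatrix_nonneg l 0 1, wordMatrix_nonneg l 1 0,
    sq_nonneg (wordMatrix l 0 0 - wordMatrix l 1 1)]

lemma cfFin_nonneg (l : List ℕ) : 0 ≤ cfFin l := by
  induction l with
  | nil => simp [cfFin]
  | cons d l ih => exact one_div_nonneg.2 (add_nonneg d.cast_nonneg ih)

lemma cfFin_le_one {l : List ℕ} (hl : ∀ d ∈ l, 1 ≤ d) : cfFin l ≤ 1 := by
  cases l with
  | nil => simp [cfFin]
  | cons d l =>
    have hd : (1 : ℝ) ≤ d := by exact_mod_cast hl d List.mem_cons_self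
    exact div_le_one_of_le₀ (by linarith [cfFin_nonneg l]) (by linarith [cfFin_nonneg l])

lemma wordMatrix_one_one_le_denom (l : List ℕ) {x : ℝ} (hx : 0 ≤ x) :
    (wordMatrix l 1 1 : ℝ) ≤ wordMatrix l 1 0 * x + wordMatrix l 1 1 :=
  le_add_of_nonneg_left (mul_nonneg (by exact_mod_cast wordMatrix_nonneg l 1 0) hx)

lemma max_one_length_le_wordMatrix_one_one {l : List ℕ} (hl : ∀ d ∈ l, 1 ≤ d) :
    max 1 (l.length : ℝ) ≤ wordMatrix l 1 1 := by
  obtain ⟨h1, hlen, -⟩ := wordMatrix_one_one_growth hl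
  exact max_le (by exact_mod_cast h1) (by exact_mod_cast hlen)

lemma one_le_wordMatrix_denom {l : List ℕ} (hl : ∀ d ∈ l, 1 ≤ d) {x : ℝ} (hx : 0 ≤ x) :
    1 ≤ (wordMatrix l 1 0 : ℝ) * x + wordMatrix l 1 1 :=
  (le_max_left _ _).trans ((max_one_length_le_wordMatrix_one_one hl).trans
    (wordMatrix_one_one_le_denom l hx))

lemma cfFin_append {l : List ℕ} (hl : ∀ d ∈ l, 1 ≤ d) (m : List ℕ) :
    cfFin (l ++ m) = moebius (wordMatrix l) (cfFin m) := by
  induction l with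
  | nil => simp [moebius]
  | cons d l ih =>
    have hden := one_le_wordMatrix_denom (fun x hx => hl x (List.mem_cons_of_mem d hx))
      (cfFin_nonneg m)
    obtain ⟨h00, h01, h10, h11⟩ := wordMatrix_cons_apply d l
    rw [List.cons_append, cfFin, ih fun x hx => hl x (List.mem_cons_of_mem d hx), moebius,
      moebius, h00, h01, h10, h11]
    push_cast
    rw [add_div' _ _ _ (by positivity), one_div_div]
    ring_nf

lemma moebius_sub (M : Matrix (Fin 2) (Fin 2) ℤ) {x y : ℝ} (hx : (M 1 0 : ℝ) * x + M 1 1 ≠ 0)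
    (hy : (M 1 0 : ℝ) * y + M 1 1 ≠ 0) :
    moebius M x - moebius M y =
      M.det * (x - y) / (((M 1 0 : ℝ) * x + M 1 1) * ((M 1 0 : ℝ) * y + M 1 1)) := by
  rw [moebius, moebius, div_sub_div _ _ hx hy, Matrix.det_fin_two]
  push_cast
  ring

lemma abs_cfFin_append_sub_le {l m₁ m₂ : List ℕ} (hl : ∀ d ∈ l, 1 ≤ d)
    (hm₁ : ∀ d ∈ m₁, 1 ≤ d) (hm₂ : ∀ d ∈ m₂, 1 ≤ d) :
    |cfFin (l ++ m₁) - cfFin (l ++ m₂)| ≤ 1 / max 1 (l.length : ℝ) := by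
  have hdet : |((wordMatrix l).det : ℝ)| = 1 := by
    rw [wordMatrix_det]; push_cast; rw [abs_pow, abs_neg, abs_one, one_pow]
  have hxy : |cfFin m₁ - cfFin m₂| ≤ 1 := abs_sub_le_iff.2
    ⟨by linarith [cfFin_le_one hm₁, cfFin_nonneg m₂],
      by linarith [cfFin_le_one hm₂, cfFin_nonneg m₁]⟩
  have hQx := (max_one_length_le_wordMatrix_one_one hl).trans
    (wordMatrix_one_one_le_denom l (cfFin_nonneg m₁))
  have hQy := one_le_wordMatrix_denom hl (cfFin_nonneg m₂)
  have hQx' : 0 < (wordMatrix l 1 0 : ℝ) * cfFin m₁ + wordMatrix l 1 1 :=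
    one_pos.trans_le ((le_max_left _ _).trans hQx)
  have hQy' : 0 < (wordMatrix l 1 0 : ℝ) * cfFin m₂ + wordMatrix l 1 1 := one_pos.trans_le hQy
  rw [cfFin_append hl, cfFin_append hl, moebius_sub _ hQx'.ne' hQy'.ne', abs_div, abs_mul, hdet,
    one_mul, abs_of_pos (mul_pos hQx' hQy')]
  exact div_le_div₀ zero_le_one hxy (by positivity) (by nlinarith)

section InfiniteContinuedFraction

def prefixList (b : ℕ → ℕ) (n : ℕ) : List ℕ := List.ofFn fun i : Fin n => b i

variable {b : ℕ → ℕ}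

@[simp] lemma prefixList_length (b : ℕ → ℕ) (n : ℕ) : (prefixList b n).length = n :=
  List.length_ofFn

lemma prefixList_pos (hb : ∀ n, 1 ≤ b n) (n : ℕ) : ∀ d ∈ prefixList b n, 1 ≤ d := by
  simp only [prefixList, List.mem_ofFn, forall_exists_index]
  rintro _ i rfl
  exact hb i

lemma prefixList_add (b : ℕ → ℕ) (m n : ℕ) :
    prefixList b (m + n) = prefixList b m ++ prefixList (fun i => b (m + i)) n :=
  List.ofFn_add

lemma prefixList_eq_append (b : ℕ → ℕ) {m n : ℕ} (h : m ≤ n) :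
    prefixList b n = prefixList b m ++ prefixList (fun i => b (m + i)) (n - m) := by
  rw [← prefixList_add, Nat.add_sub_cancel' h]

lemma prefixList_congr {c : ℕ → ℕ} {n : ℕ} (h : ∀ i < n, b i = c i) :
    prefixList b n = prefixList c n :=
  List.ofFn_inj.2 (funext fun i => h i i.isLt)

lemma tendsto_one_div_max_one : Tendsto (fun n : ℕ => 1 / max 1 (n : ℝ)) atTop (𝓝 0) :=
  tendsto_one_div_atTop_nhds_zero_nat.congr' <| eventually_atTop.2
    ⟨1, fun n hn => by simp only [max_eq_right (Nat.one_le_cast.2 hn)]⟩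

lemma abs_cfFin_prefixList_sub_le (hb : ∀ n, 1 ≤ b n) {K n n' : ℕ} (hn : K ≤ n) (hn' : K ≤ n') :
    |cfFin (prefixList b n) - cfFin (prefixList b n')| ≤ 1 / max 1 (K : ℝ) := by
  have htail := prefixList_pos (b := fun i => b (K + i)) (fun i => hb _)
  simpa [prefixList_eq_append b hn, prefixList_eq_append b hn'] using
    abs_cfFin_append_sub_le (prefixList_pos hb K) (htail (n - K)) (htail (n' - K))

lemma tendsto_cfInf (hb : ∀ n, 1 ≤ b n) :
    Tendsto (fun n => cfFin (prefixList b n)) atTop (𝓝 (cfInf b)) := by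
  have hcauchy : CauchySeq fun n => cfFin (prefixList b n) :=
    cauchySeq_of_le_tendsto_0 _ (fun n n' _ hn hn' => (Real.dist_eq _ _).trans_le
      (abs_cfFin_prefixList_sub_le hb hn hn')) tendsto_one_div_max_one
  obtain ⟨x, hx⟩ := cauchySeq_tendsto_of_complete hcauchy
  rwa [show cfInf b = x from hx.limUnder_eq]

lemma tendsto_cfFin_prefixList_append (hb : ∀ n, 1 ≤ b n) {m : ℕ → List ℕ}
    (hm : ∀ n, ∀ d ∈ m n, 1 ≤ d) :
    Tendsto (fun n => cfFin (prefixList b n ++ m n)) atTop (𝓝 (cfInf b)) := by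
  refine tendsto_of_tendsto_of_dist (tendsto_cfInf hb) (squeeze_zero (fun _ => dist_nonneg)
    (fun n => ?_) tendsto_one_div_max_one)
  simpa [Real.dist_eq, abs_sub_comm] using
    abs_cfFin_append_sub_le (m₁ := []) (prefixList_pos hb n) (by simp) (hm n)

lemma cfInf_nonneg (hb : ∀ n, 1 ≤ b n) : 0 ≤ cfInf b :=
  ge_of_tendsto' (tendsto_cfInf hb) fun _ => cfFin_nonneg _

lemma cfInf_eq_moebius_of_periodic (hb : ∀ n, 1 ≤ b n) {p : ℕ} (hper : ∀ n, b (n + p) = b n) :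
    cfInf b = moebius (wordMatrix (prefixList b p)) (cfInf b) := by
  set M := wordMatrix (prefixList b p)
  have hshift : ∀ k, cfFin (prefixList b (p + k)) = moebius M (cfFin (prefixList b k)) := by
    intro k
    rw [prefixList_add, cfFin_append (prefixList_pos hb p)]
    simp_rw [Nat.add_comm p, hper]
    rfl
  have hden := one_le_wordMatrix_denom (prefixList_pos hb p) (cfInf_nonneg hb)
  have hlim := tendsto_cfInf hb
  refine tendsto_nhds_unique ((hlim.comp (tendsto_add_atTop_nat p)).congr' ?_)
    (((hlim.const_mul _).add_const _).div ((hlim.const_mul _).add_const _) (by linarith))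
  exact Eventually.of_forall fun k => by simp [Nat.add_comm k p, hshift, moebius]

lemma exists_rat_cfInf_eq_add_mul_of_periodic (hb : ∀ n, 1 ≤ b n) {p : ℕ} (hp : 0 < p)
    (hper : ∀ n, b (n + p) = b n) {s : ℝ} (hs : s ^ 2 = wordDisc (prefixList b p)) :
    ∃ q r : ℚ, cfInf b = q + r * s := by
  set M := wordMatrix (prefixList b p)
  obtain ⟨m, rfl⟩ : ∃ m, p = m + 1 := ⟨p - 1, by omega⟩
  have hA : 1 ≤ M 1 0 := by
    simpa only [M, prefixList, List.ofFn_succ, Fin.val_zero] using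
      one_le_wordMatrix_cons_one_zero (hb 0) _
  have hfix := cfInf_eq_moebius_of_periodic hb hper
  have hden := one_le_wordMatrix_denom (prefixList_pos hb (m + 1)) (cfInf_nonneg hb)
  rw [moebius, eq_div_iff (by linarith)] at hfix
  refine exists_rat_eq_add_mul_of_quadratic (A := M 1 0) (B := M 1 1 - M 0 0) (C := -M 0 1)
    (by omega) ?_ ?_
  · push_cast; linear_combination hfix
  · rw [hs, wordDisc, Matrix.trace_fin_two, Matrix.det_fin_two]; push_cast; ring

end InfiniteContinuedFraction

section EventuallyPeriodic

variable {a : ℕ → ℕ} {N p K : ℕ}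

lemma add_mul_eq_of_eventually_periodic (hper : ∀ k, N ≤ k → a (k + p) = a k) (n : ℕ)
    {k : ℕ} (hk : N ≤ k) : a (k + n * p) = a k := by
  induction n with
  | zero => simp
  | succ n ih => rw [Nat.succ_mul, ← Nat.add_assoc, hper _ (by omega), ih]

/-- The reversed words `a (K + n p - 1), …, a 0` of `cfV` share ever longer prefixes with this
purely periodic sequence, whose period word is `a (K + p - 1), …, a K`. -/
def reversedPeriod (a : ℕ → ℕ) (p K : ℕ) : ℕ → ℕ := fun j => a (K + p - 1 - j % p)

lemma reversedPeriod_add_period (n : ℕ) :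
    reversedPeriod a p K (n + p) = reversedPeriod a p K n := by
  simp [reversedPeriod]

lemma prefixList_reversedPeriod :
    prefixList (reversedPeriod a p K) p = (prefixList (fun i => a (K + i)) p).reverse := by
  refine List.ext_getElem (by simp) fun j hj _ => ?_
  simp only [prefixList_length] at hj
  simp only [prefixList, List.getElem_ofFn, List.getElem_reverse, List.length_ofFn, reversedPeriod,
    Nat.mod_eq_of_lt hj]
  congr 1
  omega

lemma reversedPeriod_eq (hp : 0 < p) (hper : ∀ k, N ≤ k → a (k + p) = a k) (hK : N ≤ K)
    {i n : ℕ} (hi : i < n) : reversedPeriod a p K i = a (K + n * p - 1 - i) := by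
  obtain ⟨m, rfl⟩ : ∃ m, n = i / p + m + 1 :=
    Nat.exists_eq_add_of_lt ((Nat.div_le_self i p).trans_lt hi)
  have hi' := Nat.div_add_mod i p
  have hs := Nat.mod_lt i hp
  have hidx : K + (i / p + m + 1) * p - 1 - i = K + p - 1 - i % p + m * p := by
    rw [Nat.add_mul, Nat.add_mul, Nat.mul_comm (i / p)]
    omega
  rw [hidx, add_mul_eq_of_eventually_periodic hper m (by omega), reversedPeriod]

lemma range_add_reverse_map (a : ℕ → ℕ) (j n : ℕ) :
    (List.range (j + n)).reverse.map a =
      prefixList (fun i => a (j + n - 1 - i)) n ++ (List.range j).reverse.map a := by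
  rw [List.range_add, List.reverse_append, List.map_append]
  congr 1
  refine List.ext_getElem (by simp) fun i hi _ => ?_
  simp only [List.length_map, List.length_reverse, List.length_range] at hi
  simp only [prefixList, List.getElem_map, List.getElem_reverse, List.getElem_range,
    List.getElem_ofFn, List.length_map, List.length_range]
  congr 1
  omega

lemma tendsto_cfV_add_mul (ha : ∀ n, 1 ≤ a n) (hp : 0 < p)
    (hper : ∀ k, N ≤ k → a (k + p) = a k) (hK : N ≤ K) :
    Tendsto (fun n => cfV a (K + n * p)) atTop (𝓝 (cfInf (reversedPeriod a p K))) := by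
  have hsplit : ∀ n, cfV a (K + n * p) = cfFin (prefixList (reversedPeriod a p K) n ++
      (List.range (K + n * p - n)).reverse.map a) := fun n => by
    have hn : K + n * p = K + n * p - n + n :=
      (Nat.sub_add_cancel ((Nat.le_mul_of_pos_right n hp).trans (Nat.le_add_left _ _))).symm
    rw [cfV, hn, range_add_reverse_map, ← hn,
      prefixList_congr fun i hi => (reversedPeriod_eq hp hper hK hi).symm]
  simp_rw [hsplit]
  refine tendsto_cfFin_prefixList_append (fun _ => ha _) fun n d hd => ?_
  obtain ⟨k, -, rfl⟩ := List.mem_map.1 hd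
  exact ha k

lemma cfT_add_mul (hper : ∀ k, N ≤ k → a (k + p) = a k) (hK : N ≤ K) (n : ℕ) :
    cfT a (K + n * p + 1) = cfT a (K + 1) := by
  unfold cfT
  congr 1
  funext j
  rw [show j + (K + n * p + 1) = j + (K + 1) + n * p by ring,
    add_mul_eq_of_eventually_periodic hper n (by omega)]

lemma tendsto_lagrange_residue_class (ha : ∀ n, 1 ≤ a n) (hp : 0 < p)
    (hper : ∀ k, N ≤ k → a (k + p) = a k) (hK : N ≤ K) :
    Tendsto (fun n => (a (K + n * p) : ℝ) + cfV a (K + n * p) + cfT a (K + n * p + 1)) atTop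
      (𝓝 (a K + cfInf (reversedPeriod a p K) + cfT a (K + 1))) := by
  simp_rw [add_mul_eq_of_eventually_periodic hper _ hK, cfT_add_mul hper hK]
  exact ((tendsto_cfV_add_mul ha hp hper hK).const_add _).add_const _

lemma wordDisc_reversedPeriod (hp : 0 < p) (hper : ∀ k, N ≤ k → a (k + p) = a k) (hK : N ≤ K) :
    wordDisc (prefixList (reversedPeriod a p K) p) =
      wordDisc (prefixList (fun n => a (n + (K + 1))) p) := by
  obtain ⟨m, rfl⟩ : ∃ m, p = m + 1 := ⟨p - 1, by omega⟩
  have hfirst : prefixList (fun i => a (K + i)) (m + 1) =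
      [a K] ++ prefixList (fun n => a (n + (K + 1))) m := by
    rw [Nat.add_comm, prefixList_add]
    congr 2
    funext i
    rw [Nat.add_comm i, Nat.add_assoc]
  have hlast : prefixList (fun n => a (n + (K + 1))) (m + 1) =
      prefixList (fun n => a (n + (K + 1))) m ++ [a K] := by
    rw [prefixList_add]
    congr 1
    simp only [prefixList, List.ofFn_succ, List.ofFn_zero, Fin.val_zero, Nat.add_zero]
    rw [← Nat.add_assoc, ← hper K hK, Nat.add_comm m, Nat.add_assoc]
  rw [prefixList_reversedPeriod, wordDisc_reverse, hfirst, hlast, wordDisc_append_comm]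

lemma exists_quadratic_lagrange_limit (ha : ∀ n, 1 ≤ a n) (hp : 0 < p)
    (hper : ∀ k, N ≤ k → a (k + p) = a k) (hK : N ≤ K) :
    ∃ A B C : ℚ, (A ≠ 0 ∨ B ≠ 0) ∧
      A * ((a K : ℝ) + cfInf (reversedPeriod a p K) + cfT a (K + 1)) ^ 2 +
        B * ((a K : ℝ) + cfInf (reversedPeriod a p K) + cfT a (K + 1)) + C = 0 := by
  set D := wordDisc (prefixList (reversedPeriod a p K) p) with hD
  have hs : √(D : ℝ) ^ 2 = D := Real.sq_sqrt (Int.cast_nonneg (wordDisc_nonneg _))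
  obtain ⟨q₁, r₁, hw⟩ := exists_rat_cfInf_eq_add_mul_of_periodic
    (b := reversedPeriod a p K) (fun _ => ha _) hp reversedPeriod_add_period hs
  obtain ⟨q₂, r₂, ht⟩ := exists_rat_cfInf_eq_add_mul_of_periodic
    (b := fun n => a (n + (K + 1))) (fun _ => ha _) hp
    (fun n => by rw [Nat.add_right_comm, hper _ (by omega)])
    (hs.trans (by rw [hD, wordDisc_reversedPeriod hp hper hK]))
  refine exists_quadratic_of_eq_add_mul (D := D) (by exact_mod_cast hs)
    (q := a K + q₁ + q₂) (r := r₁ + r₂) ?_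
  rw [cfT, hw, ht]
  push_cast
  ring

end EventuallyPeriodic

/-- for eventually periodic partial quotients, the Lagrange value
limsup (bₖ + v_{k-1} + tₖ) is quadratic over ℚ. -/
theorem stmt19 (a : ℕ → ℕ) (ha : ∀ n, 1 ≤ a n) (N p : ℕ) (hp : 0 < p)
    (hper : ∀ k, N ≤ k → a (k + p) = a k) :
    ∃ A B C : ℚ, (A ≠ 0 ∨ B ≠ 0) ∧
      (A : ℝ) * (Filter.limsup (fun k => (a k : ℝ) + cfV a k + cfT a (k + 1))
          Filter.atTop) ^ 2 +
        (B : ℝ) * Filter.limsup (fun k => (a k : ℝ) + cfV a k + cfT a (k + 1))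
          Filter.atTop + (C : ℝ) = 0 := by
  obtain ⟨r, -, hlim⟩ := limsup_eq_of_tendsto_residue_classes
    (f := fun k => (a k : ℝ) + cfV a k + cfT a (k + 1))
    (L := fun r => a (N + r) + cfInf (reversedPeriod a p (N + r)) + cfT a (N + r + 1)) hp
    fun r _ => tendsto_lagrange_residue_class ha hp hper (Nat.le_add_right N r)
  rw [hlim]
  exact exists_quadratic_lagrange_limit ha hp hper (Nat.le_add_right N r)
end
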